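/- arXiv:1512.04648 — 8 statements merged into one kernel-verified Lean document; each statement's English description precedes it below -/
import Mathlib

section
/- Let (E,F) be a triangulation datum and r ≥ 3 an integer. If θ ∈ Adm(E,F,r), then the reduction θ′ of θ, defined by θ′(e) = θ(e) − ⌊θ(e)⌋ for every e ∈ E (so that θ′ takes values in {0, 1/2}), is an admissible colouring in Adm(E,F,3). -/
/-- A colouring `θ : E → ℚ` is admissible for the triangulation datum `(E, F)`
and the integer `r` if every edge colour lies in `{0, 1/2, 1, …, (r-2)/2}` and
every triple of `F` satisfies the parity condition, the triangle inequalities,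
and the upper bound constraint. -/
def IsAdmissible {E : Type*} (F : Multiset (E × E × E)) (r : ℕ) (θ : E → ℚ) : Prop :=
  (∀ e : E, ∃ k : ℕ, k ≤ r - 2 ∧ θ e = (k : ℚ) / 2) ∧
  ∀ t ∈ F,
    (∃ z : ℤ, θ t.1 + θ t.2.1 + θ t.2.2 = (z : ℚ)) ∧
    θ t.1 ≤ θ t.2.1 + θ t.2.2 ∧
    θ t.2.1 ≤ θ t.1 + θ t.2.2 ∧
    θ t.2.2 ≤ θ t.1 + θ t.2.1 ∧
    θ t.1 + θ t.2.1 + θ t.2.2 ≤ (r : ℚ) - 2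

/-- The set of admissible colourings of `(E, F)` for the integer `r`. -/
def Adm {E : Type*} (F : Multiset (E × E × E)) (r : ℕ) : Set (E → ℚ) :=
  {θ | IsAdmissible F r θ}

lemma half_fract (x : ℚ) (k : ℕ) (hk : x = (k : ℚ) / 2) :
    x - ⌊x⌋ = 0 ∨ x - ⌊x⌋ = 1 / 2 := by
  rcases Nat.even_or_odd k with ⟨m, hm⟩ | ⟨m, hm⟩
  · left
    subst hm
    have hx : x = (m : ℚ) := by rw [hk]; push_cast; ring
    rw [hx]
    rw [show ((m : ℚ)) = ((m : ℤ) : ℚ) by push_cast; ring, Int.floor_intCast]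
    ring
  · right
    subst hm
    have hx : x = (m : ℚ) + 1 / 2 := by rw [hk]; push_cast; ring
    rw [hx]
    have : ⌊(m : ℚ) + 1 / 2⌋ = (m : ℤ) := by
      rw [Int.floor_eq_iff]
      constructor <;> push_cast <;> linarith
    rw [this]
    push_cast
    ring

lemma half_triple (a b c : ℚ) (ha : a = 0 ∨ a = 1/2) (hb : b = 0 ∨ b = 1/2)
    (hc : c = 0 ∨ c = 1/2) (z : ℤ) (hz : a + b + c = z) :
    a ≤ b + c ∧ b ≤ a + c ∧ c ≤ a + b ∧ a + b + c ≤ 1 := by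
  rcases ha with ha | ha <;> rcases hb with hb | hb <;> rcases hc with hc | hc <;>
    subst ha <;> subst hb <;> subst hc <;> norm_num at hz ⊢ <;>
  · exfalso
    have h2 : (2 * z : ℚ) = 2 * z := rfl
    first
    | (have : (2 * z : ℤ) = 1 := by
        have : (2 * z : ℚ) = 1 := by rw [← hz]; ring
        exact_mod_cast this
       omega)
    | (have : (2 * z : ℤ) = 3 := by
        have : (2 * z : ℚ) = 3 := by rw [← hz]; ring
        exact_mod_cast this
       omega)

/-- If `θ ∈ Adm(E,F,r)` then its reduction `e ↦ θ e − ⌊θ e⌋` lies in `Adm(E,F,3)`. -/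
theorem reduction_admissible {E : Type*} (F : Multiset (E × E × E)) (r : ℕ) (hr : 3 ≤ r)
    (θ : E → ℚ) (hθ : θ ∈ Adm F r) :
    (fun e => θ e - ⌊θ e⌋) ∈ Adm F 3 := by
  obtain ⟨hcol, htri⟩ := hθ
  have hhalf : ∀ e, θ e - ⌊θ e⌋ = 0 ∨ θ e - ⌊θ e⌋ = 1/2 := by
    intro e
    obtain ⟨k, _, hk⟩ := hcol e
    exact half_fract _ _ hk
  constructor
  · intro e
    rcases hhalf e with h | h
    · exact ⟨0, by norm_num, by simpa using h⟩
    · exact ⟨1, by norm_num, by simpa using h⟩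
  · intro t ht
    obtain ⟨⟨z, hz⟩, _, _, _, _⟩ := htri t ht
    have hz' : (θ t.1 - ⌊θ t.1⌋) + (θ t.2.1 - ⌊θ t.2.1⌋) + (θ t.2.2 - ⌊θ t.2.2⌋)
        = ((z - ⌊θ t.1⌋ - ⌊θ t.2.1⌋ - ⌊θ t.2.2⌋ : ℤ) : ℚ) := by
      push_cast
      linarith
    obtain ⟨h1, h2, h3, h4⟩ := half_triple _ _ _ (hhalf t.1) (hhalf t.2.1) (hhalf t.2.2) _ hz'
    refine ⟨⟨_, hz'⟩, h1, h2, h3, by push_cast; linarith⟩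
end

section
/- Let φ assign a nonnegative integer φ(uv) to each of the six edges uv of the complete graph on the vertex set {1,2,3,4}. Then the following are equivalent. (a) For each of the four triples {u,v,w} ⊆ {1,2,3,4}, the sum φ(uv)+φ(uw)+φ(vw) is even, and φ(uv) ≤ φ(uw)+φ(vw), φ(uw) ≤ φ(uv)+φ(vw), φ(vw) ≤ φ(uv)+φ(uw). (b) There exist nonnegative integers α₁, α₂, α₃, α₄, p, and coprime nonnegative integers i, j (gcd(i,j) = 1), together with an assignment m of the three values i, j, i+j — each used exactly once — to the three pairs of opposite edges {12,34}, {13,24}, {14,23} (so m(uv) denotes the value assigned to the pair containing uv), such that φ(uv) = α_u + α_v + p·m(uv) for every edge uv. -/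
private lemma tetra_helper (a b c d e f : ℕ)
    (p1 : (a + b + d) % 2 = 0) (p2 : (a + c + e) % 2 = 0)
    (p3 : (b + c + f) % 2 = 0) (p4 : (d + e + f) % 2 = 0)
    (t1 : d ≤ a + b) (t2 : c ≤ a + e) (t3 : c ≤ b + f) (t4 : d ≤ e + f)
    (t5 : a ≤ b + d) (t6 : b ≤ a + d) (t7 : a ≤ c + e) (t8 : e ≤ a + c)
    (t9 : b ≤ c + f) (t10 : f ≤ b + c) (t11 : e ≤ d + f) (t12 : f ≤ d + e)
    (hm1 : b + e ≤ c + d) (hm2 : a + f ≤ c + d) :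
    ∃ α0 α1 α2 α3 p i j m1 m2 m3 : ℕ,
      Nat.gcd i j = 1 ∧
      ({m1, m2, m3} : Multiset ℕ) = ({i, j, i + j} : Multiset ℕ) ∧
      a = α0 + α1 + p * m1 ∧ b = α0 + α2 + p * m2 ∧ c = α0 + α3 + p * m3 ∧
      d = α1 + α2 + p * m3 ∧ e = α1 + α3 + p * m2 ∧ f = α2 + α3 + p * m1 := by
  obtain ⟨r1, hr1⟩ : ∃ r, r = (c + d - (b + e)) / 2 := ⟨_, rfl⟩
  obtain ⟨r2, hr2⟩ : ∃ r, r = (c + d - (a + f)) / 2 := ⟨_, rfl⟩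
  have e1 : a = (a + b - d) / 2 + (a + e - c) / 2 + r1 := by omega
  have e2 : b = (a + b - d) / 2 + (b + f - c) / 2 + r2 := by omega
  have e3 : c = (a + b - d) / 2 + (e + f - d) / 2 + (r1 + r2) := by omega
  have e4 : d = (a + e - c) / 2 + (b + f - c) / 2 + (r1 + r2) := by omega
  have e5 : e = (a + e - c) / 2 + (e + f - d) / 2 + r2 := by omega
  have e6 : f = (b + f - c) / 2 + (e + f - d) / 2 + r1 := by omega
  rcases Nat.eq_zero_or_pos (Nat.gcd r1 r2) with hg | hg
  · obtain ⟨hz1, hz2⟩ := Nat.gcd_eq_zero_iff.mp hg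
    exact ⟨(a+b-d)/2, (a+e-c)/2, (b+f-c)/2, (e+f-d)/2, 0, 0, 1, 0, 1, 1,
      by norm_num, by norm_num, by omega, by omega, by omega, by omega, by omega, by omega⟩
  · have k1 : Nat.gcd r1 r2 * (r1 / Nat.gcd r1 r2) = r1 :=
      Nat.mul_div_cancel' (Nat.gcd_dvd_left r1 r2)
    have k2 : Nat.gcd r1 r2 * (r2 / Nat.gcd r1 r2) = r2 :=
      Nat.mul_div_cancel' (Nat.gcd_dvd_right r1 r2)
    refine ⟨(a+b-d)/2, (a+e-c)/2, (b+f-c)/2, (e+f-d)/2, Nat.gcd r1 r2,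
      r1 / Nat.gcd r1 r2, r2 / Nat.gcd r1 r2,
      r1 / Nat.gcd r1 r2, r2 / Nat.gcd r1 r2, r1 / Nat.gcd r1 r2 + r2 / Nat.gcd r1 r2,
      Nat.coprime_div_gcd_div_gcd hg, rfl, ?_, ?_, ?_, ?_, ?_, ?_⟩
    · rw [k1]; omega
    · rw [k2]; omega
    · rw [Nat.mul_add, k1, k2]; omega
    · rw [Nat.mul_add, k1, k2]; omega
    · rw [k2]; omega
    · rw [k1]; omega

private lemma ms_rev (x y z : ℕ) : ({x, y, z} : Multiset ℕ) = ({z, y, x} : Multiset ℕ) := by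
  show x ::ₘ y ::ₘ z ::ₘ 0 = z ::ₘ y ::ₘ x ::ₘ 0
  rw [Multiset.cons_swap x y, Multiset.cons_swap x z, Multiset.cons_swap y z]

private lemma ms_swap23 (x y z : ℕ) : ({x, y, z} : Multiset ℕ) = ({x, z, y} : Multiset ℕ) := by
  show x ::ₘ y ::ₘ z ::ₘ 0 = x ::ₘ z ::ₘ y ::ₘ 0
  rw [Multiset.cons_swap y z]

private lemma tetra_assemble (φ : Fin 4 → Fin 4 → ℕ)
    (hsymm : ∀ u v, φ u v = φ v u)
    (α0 α1 α2 α3 p i j m1 m2 m3 : ℕ)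
    (hij : Nat.gcd i j = 1)
    (hms : ({m1, m2, m3} : Multiset ℕ) = ({i, j, i + j} : Multiset ℕ))
    (e1 : φ 0 1 = α0 + α1 + p * m1) (e2 : φ 0 2 = α0 + α2 + p * m2)
    (e3 : φ 0 3 = α0 + α3 + p * m3) (e4 : φ 1 2 = α1 + α2 + p * m3)
    (e5 : φ 1 3 = α1 + α3 + p * m2) (e6 : φ 2 3 = α2 + α3 + p * m1) :
    (∃ (α : Fin 4 → ℕ) (p i j : ℕ) (m : Fin 4 → Fin 4 → ℕ),
        Nat.gcd i j = 1 ∧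
        (∀ u v, m u v = m v u) ∧
        m 0 1 = m 2 3 ∧ m 0 2 = m 1 3 ∧ m 0 3 = m 1 2 ∧
        ({m 0 1, m 0 2, m 0 3} : Multiset ℕ) = ({i, j, i + j} : Multiset ℕ) ∧
        ∀ u v : Fin 4, u ≠ v → φ u v = α u + α v + p * m u v) := by
  refine ⟨![α0, α1, α2, α3], p, i, j,
    ![![0, m1, m2, m3], ![m1, 0, m3, m2], ![m2, m3, 0, m1], ![m3, m2, m1, 0]],
    hij, ?_, rfl, rfl, rfl, hms, ?_⟩
  · intro u v; fin_cases u <;> fin_cases v <;> rfl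
  · intro u v huv
    fin_cases u <;> fin_cases v
    · exact absurd rfl huv
    · exact e1
    · exact e2
    · exact e3
    · show φ 1 0 = α1 + α0 + p * m1
      rw [hsymm 1 0, e1]; ring
    · exact absurd rfl huv
    · exact e4
    · exact e5
    · show φ 2 0 = α2 + α0 + p * m2
      rw [hsymm 2 0, e2]; ring
    · show φ 2 1 = α2 + α1 + p * m3
      rw [hsymm 2 1, e4]; ring
    · exact absurd rfl huv
    · exact e6
    · show φ 3 0 = α3 + α0 + p * m3
      rw [hsymm 3 0, e3]; ring
    · show φ 3 1 = α3 + α1 + p * m2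
      rw [hsymm 3 1, e5]; ring
    · show φ 3 2 = α3 + α2 + p * m1
      rw [hsymm 3 2, e6]; ring
    · exact absurd rfl huv

/-- Classification of admissible tetrahedron colourings: a symmetric assignment
`φ` of nonnegative integers to the six edges of the complete graph on `{1,2,3,4}`
satisfies the parity condition and triangle inequalities on all four faces if and
only if it decomposes as `φ(uv) = α_u + α_v + p·m(uv)`, where `m` assigns the
three values `i`, `j`, `i+j` (each used exactly once, `gcd(i,j) = 1`) to the
three pairs of opposite edges. -/
theorem tetrahedron_colouring_classification (φ : Fin 4 → Fin 4 → ℕ)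
    (hsymm : ∀ u v, φ u v = φ v u) :
    (∀ u v w : Fin 4, u ≠ v → u ≠ w → v ≠ w →
        Even (φ u v + φ u w + φ v w) ∧
        φ u v ≤ φ u w + φ v w ∧ φ u w ≤ φ u v + φ v w ∧ φ v w ≤ φ u v + φ u w)
    ↔
    (∃ (α : Fin 4 → ℕ) (p i j : ℕ) (m : Fin 4 → Fin 4 → ℕ),
        Nat.gcd i j = 1 ∧
        (∀ u v, m u v = m v u) ∧
        m 0 1 = m 2 3 ∧ m 0 2 = m 1 3 ∧ m 0 3 = m 1 2 ∧
        ({m 0 1, m 0 2, m 0 3} : Multiset ℕ) = ({i, j, i + j} : Multiset ℕ) ∧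
        ∀ u v : Fin 4, u ≠ v → φ u v = α u + α v + p * m u v) := by
  constructor
  · intro h
    obtain ⟨q1, u1, u2, u3⟩ := h 0 1 2 (by decide) (by decide) (by decide)
    obtain ⟨q2, v1, v2, v3⟩ := h 0 1 3 (by decide) (by decide) (by decide)
    obtain ⟨q3, w1, w2, w3⟩ := h 0 2 3 (by decide) (by decide) (by decide)
    obtain ⟨q4, x1, x2, x3⟩ := h 1 2 3 (by decide) (by decide) (by decide)
    rw [Nat.even_iff] at q1 q2 q3 q4
    rcases le_total (φ 0 2 + φ 1 3) (φ 0 3 + φ 1 2) with hbe | hbe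
    · rcases le_total (φ 0 1 + φ 2 3) (φ 0 3 + φ 1 2) with haf | haf
      · -- pair {03,12} is maximal
        obtain ⟨α0, α1, α2, α3, p, i, j, m1, m2, m3, hij, hms, e1, e2, e3, e4, e5, e6⟩ :=
          tetra_helper (φ 0 1) (φ 0 2) (φ 0 3) (φ 1 2) (φ 1 3) (φ 2 3)
            (by omega) (by omega) (by omega) (by omega)
            (by omega) (by omega) (by omega) (by omega)
            (by omega) (by omega) (by omega) (by omega)
            (by omega) (by omega) (by omega) (by omega)
            hbe haf
        exact tetra_assemble φ hsymm α0 α1 α2 α3 p i j m1 m2 m3 hij hms e1 e2 e3 e4 e5 e6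
      · -- pair {01,23} is maximal
        obtain ⟨α0, α1, α2, α3, p, i, j, m1, m2, m3, hij, hms, e1, e2, e3, e4, e5, e6⟩ :=
          tetra_helper (φ 0 3) (φ 0 2) (φ 0 1) (φ 2 3) (φ 1 3) (φ 1 2)
            (by omega) (by omega) (by omega) (by omega)
            (by omega) (by omega) (by omega) (by omega)
            (by omega) (by omega) (by omega) (by omega)
            (by omega) (by omega) (by omega) (by omega)
            (by omega) (by omega)
        refine tetra_assemble φ hsymm α0 α3 α2 α1 p i j m3 m2 m1 hij ?_
          e3 e2 e1 (e6.trans (by ring)) (e5.trans (by ring)) (e4.trans (by ring))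
        rw [ms_rev m3 m2 m1]; exact hms
    · rcases le_total (φ 0 1 + φ 2 3) (φ 0 2 + φ 1 3) with haf | haf
      · -- pair {02,13} is maximal
        obtain ⟨α0, α1, α2, α3, p, i, j, m1, m2, m3, hij, hms, e1, e2, e3, e4, e5, e6⟩ :=
          tetra_helper (φ 0 1) (φ 0 3) (φ 0 2) (φ 1 3) (φ 1 2) (φ 2 3)
            (by omega) (by omega) (by omega) (by omega)
            (by omega) (by omega) (by omega) (by omega)
            (by omega) (by omega) (by omega) (by omega)
            (by omega) (by omega) (by omega) (by omega)
            (by omega) (by omega)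
        refine tetra_assemble φ hsymm α0 α1 α3 α2 p i j m1 m3 m2 hij ?_
          e1 e3 e2 e5 e4 (e6.trans (by ring))
        rw [ms_swap23 m1 m3 m2]; exact hms
      · -- pair {01,23} is maximal
        obtain ⟨α0, α1, α2, α3, p, i, j, m1, m2, m3, hij, hms, e1, e2, e3, e4, e5, e6⟩ :=
          tetra_helper (φ 0 3) (φ 0 2) (φ 0 1) (φ 2 3) (φ 1 3) (φ 1 2)
            (by omega) (by omega) (by omega) (by omega)
            (by omega) (by omega) (by omega) (by omega)
            (by omega) (by omega) (by omega) (by omega)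
            (by omega) (by omega) (by omega) (by omega)
            (by omega) (by omega)
        refine tetra_assemble φ hsymm α0 α3 α2 α1 p i j m3 m2 m1 hij ?_
          e3 e2 e1 (e6.trans (by ring)) (e5.trans (by ring)) (e4.trans (by ring))
        rw [ms_rev m3 m2 m1]; exact hms
  · rintro ⟨α, p, i, j, m, hij, hmsym, hm1, hm2, hm3, hmul, hφ⟩
    have hmem1 : m 0 1 = i ∨ m 0 1 = j ∨ m 0 1 = i + j := by
      have : m 0 1 ∈ ({i, j, i + j} : Multiset ℕ) := by rw [← hmul]; simp
      simpa using this
    have hmem2 : m 0 2 = i ∨ m 0 2 = j ∨ m 0 2 = i + j := by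
      have : m 0 2 ∈ ({i, j, i + j} : Multiset ℕ) := by rw [← hmul]; simp
      simpa using this
    have hmem3 : m 0 3 = i ∨ m 0 3 = j ∨ m 0 3 = i + j := by
      have : m 0 3 ∈ ({i, j, i + j} : Multiset ℕ) := by rw [← hmul]; simp
      simpa using this
    have hsum : m 0 1 + m 0 2 + m 0 3 = i + j + (i + j) := by
      have h := congrArg Multiset.sum hmul
      simp [Multiset.insert_eq_cons, Multiset.sum_cons, Multiset.sum_singleton] at h
      omega
    have HK1 : p * m 0 1 ≤ p * (i + j) := mul_le_mul_right (by omega) p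
    have HK2 : p * m 0 2 ≤ p * (i + j) := mul_le_mul_right (by omega) p
    have HK3 : p * m 0 3 ≤ p * (i + j) := mul_le_mul_right (by omega) p
    have HS : p * m 0 1 + p * m 0 2 + p * m 0 3 = 2 * (p * (i + j)) := by
      calc p * m 0 1 + p * m 0 2 + p * m 0 3 = p * (m 0 1 + m 0 2 + m 0 3) := by ring
        _ = p * (2 * (i + j)) := by rw [hsum]; ring_nf
        _ = 2 * (p * (i + j)) := by ring
    have E01 : φ 0 1 = α 0 + α 1 + p * m 0 1 := hφ 0 1 (by decide)
    have E02 : φ 0 2 = α 0 + α 2 + p * m 0 2 := hφ 0 2 (by decide)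
    have E03 : φ 0 3 = α 0 + α 3 + p * m 0 3 := hφ 0 3 (by decide)
    have E12 : φ 1 2 = α 1 + α 2 + p * m 0 3 := by rw [hφ 1 2 (by decide), ← hm3]
    have E13 : φ 1 3 = α 1 + α 3 + p * m 0 2 := by rw [hφ 1 3 (by decide), ← hm2]
    have E23 : φ 2 3 = α 2 + α 3 + p * m 0 1 := by rw [hφ 2 3 (by decide), ← hm1]
    have E10 : φ 1 0 = α 1 + α 0 + p * m 0 1 := by rw [hsymm 1 0, E01]; ring
    have E20 : φ 2 0 = α 2 + α 0 + p * m 0 2 := by rw [hsymm 2 0, E02]; ring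
    have E30 : φ 3 0 = α 3 + α 0 + p * m 0 3 := by rw [hsymm 3 0, E03]; ring
    have E21 : φ 2 1 = α 2 + α 1 + p * m 0 3 := by rw [hsymm 2 1, E12]; ring
    have E31 : φ 3 1 = α 3 + α 1 + p * m 0 2 := by rw [hsymm 3 1, E13]; ring
    have E32 : φ 3 2 = α 3 + α 2 + p * m 0 1 := by rw [hsymm 3 2, E23]; ring
    obtain ⟨M1, hM1⟩ : ∃ M, M = p * m 0 1 := ⟨_, rfl⟩
    obtain ⟨M2, hM2⟩ : ∃ M, M = p * m 0 2 := ⟨_, rfl⟩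
    obtain ⟨M3, hM3⟩ : ∃ M, M = p * m 0 3 := ⟨_, rfl⟩
    obtain ⟨K, hK⟩ : ∃ k, k = p * (i + j) := ⟨_, rfl⟩
    rw [← hM1] at E01 E23 E10 E32 HK1 HS
    rw [← hM2] at E02 E13 E20 E31 HK2 HS
    rw [← hM3] at E03 E12 E30 E21 HK3 HS
    rw [← hK] at HK1 HK2 HK3 HS
    have triple : ∀ A B C a1 a2 a3 N1 N2 N3 : ℕ,
        A = a1 + a2 + N1 → B = a1 + a3 + N2 → C = a2 + a3 + N3 →
        N1 + N2 + N3 = 2 * K → N1 ≤ K → N2 ≤ K → N3 ≤ K →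
        Even (A + B + C) ∧ A ≤ B + C ∧ B ≤ A + C ∧ C ≤ A + B := by
      intro A B C a1 a2 a3 N1 N2 N3 h1 h2 h3 h4 h5 h6 h7
      exact ⟨Nat.even_iff.mpr (by omega), by omega, by omega, by omega⟩
    intro u v w huv huw hvw
    fin_cases u <;> fin_cases v <;> fin_cases w <;>
      first
      | exact absurd rfl huv
      | exact absurd rfl huw
      | exact absurd rfl hvw
      | exact triple _ _ _ _ _ _ _ _ _ E01 E02 E12 (by omega) (by omega) (by omega) (by omega)
      | exact triple _ _ _ _ _ _ _ _ _ E02 E01 E21 (by omega) (by omega) (by omega) (by omega)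
      | exact triple _ _ _ _ _ _ _ _ _ E10 E12 E02 (by omega) (by omega) (by omega) (by omega)
      | exact triple _ _ _ _ _ _ _ _ _ E12 E10 E20 (by omega) (by omega) (by omega) (by omega)
      | exact triple _ _ _ _ _ _ _ _ _ E20 E21 E01 (by omega) (by omega) (by omega) (by omega)
      | exact triple _ _ _ _ _ _ _ _ _ E21 E20 E10 (by omega) (by omega) (by omega) (by omega)
      | exact triple _ _ _ _ _ _ _ _ _ E01 E03 E13 (by omega) (by omega) (by omega) (by omega)
      | exact triple _ _ _ _ _ _ _ _ _ E03 E01 E31 (by omega) (by omega) (by omega) (by omega)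
      | exact triple _ _ _ _ _ _ _ _ _ E10 E13 E03 (by omega) (by omega) (by omega) (by omega)
      | exact triple _ _ _ _ _ _ _ _ _ E13 E10 E30 (by omega) (by omega) (by omega) (by omega)
      | exact triple _ _ _ _ _ _ _ _ _ E30 E31 E01 (by omega) (by omega) (by omega) (by omega)
      | exact triple _ _ _ _ _ _ _ _ _ E31 E30 E10 (by omega) (by omega) (by omega) (by omega)
      | exact triple _ _ _ _ _ _ _ _ _ E02 E03 E23 (by omega) (by omega) (by omega) (by omega)
      | exact triple _ _ _ _ _ _ _ _ _ E03 E02 E32 (by omega) (by omega) (by omega) (by omega)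
      | exact triple _ _ _ _ _ _ _ _ _ E20 E23 E03 (by omega) (by omega) (by omega) (by omega)
      | exact triple _ _ _ _ _ _ _ _ _ E23 E20 E30 (by omega) (by omega) (by omega) (by omega)
      | exact triple _ _ _ _ _ _ _ _ _ E30 E32 E02 (by omega) (by omega) (by omega) (by omega)
      | exact triple _ _ _ _ _ _ _ _ _ E32 E30 E20 (by omega) (by omega) (by omega) (by omega)
      | exact triple _ _ _ _ _ _ _ _ _ E12 E13 E23 (by omega) (by omega) (by omega) (by omega)
      | exact triple _ _ _ _ _ _ _ _ _ E13 E12 E32 (by omega) (by omega) (by omega) (by omega)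
      | exact triple _ _ _ _ _ _ _ _ _ E21 E23 E13 (by omega) (by omega) (by omega) (by omega)
      | exact triple _ _ _ _ _ _ _ _ _ E23 E21 E31 (by omega) (by omega) (by omega) (by omega)
      | exact triple _ _ _ _ _ _ _ _ _ E31 E32 E12 (by omega) (by omega) (by omega) (by omega)
      | exact triple _ _ _ _ _ _ _ _ _ E32 E31 E21 (by omega) (by omega) (by omega) (by omega)
end

section
/- Fix integers r ≥ 3 and 0 < q < 2r with gcd(r,q) = 1, let ζ = exp(iπq/r) ∈ ℂ, and define quantum integers [0] = 1 and [k] = (ζ^k − ζ^{−k})/(ζ − ζ^{−1}) for integers k ≥ 1, and bracket factorials [k]! = ∏_{m=0}^{k} [m]. Let a, b, c, d, p, i, j be nonnegative integers, set X = p(i+j)+a+b+c+d and y = min{a,b,c,d}. Set z⁻ = max{X−a, X−b, X−c, X−d} and z⁺ = min{X+pi, X+pj, X} (these are, respectively, the four triangle colour sums and the three quadrilateral colour sums of the tetrahedron whose colouring is given by a, b, c, d vertex cycles and p balanced curves of type (i,j,i+j)). Then the Turaev–Viro tetrahedron weight Σ_{z⁻ ≤ z ≤ z⁺} (−1)^z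 [z+1]! / ( [z−X+a]! [z−X+b]! [z−X+c]! [z−X+d]! [X+pi−z]! [X+pj−z]! [X−z]! ) equals (−1)^X Σ_{0 ≤ z ≤ y} (−1)^z [X−z+1]! / ( [a−z]! [b−z]! [c−z]! [d−z]! [pi+z]! [pj+z]! [z]! ). In particular, if y = 0 the weight equals (−1)^X [X+1]! / ( [a]! [b]! [c]! [d]! [pi]! [pj]! ). -/
/-!
Substituting `z ↦ X − z` turns the sum over `z⁻ ≤ z ≤ z⁺` into the sum over `0 ≤ z ≤ y`:
since `X − a, …, X − d ≤ X ≤ X + pi, X + pj`, the range is `X − y ≤ z ≤ X`, each face factor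
`[z − X + a]!` becomes `[a − z]!`, each quadrilateral factor `[X + pi − z]!` becomes `[pi + z]!`,
and the sign `(−1)^(X − z)` splits as `(−1)^X (−1)^z`.
-/

/-- The quantum integer `[k] = (ζ^k − ζ^{−k})/(ζ − ζ^{−1})`, with `[0] = 1`. -/
noncomputable def qint (ζ : ℂ) : ℕ → ℂ
  | 0 => 1
  | k + 1 => (ζ ^ (k + 1) - ζ⁻¹ ^ (k + 1)) / (ζ - ζ⁻¹)

/-- The bracket factorial `[k]! = [k]·[k−1]⋯[0]`. -/
noncomputable def qfact (ζ : ℂ) (k : ℕ) : ℂ := ∏ m ∈ Finset.range (k + 1), qint ζ m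

open Finset

lemma qfact_zero (ζ : ℂ) : qfact ζ 0 = 1 := by
  simp [qfact, qint]

lemma neg_one_pow_tsub {R : Type*} [Monoid R] [HasDistribNeg R] {w X : ℕ} (h : w ≤ X) :
    (-1 : R) ^ (X - w) = (-1) ^ X * (-1) ^ w := by
  calc (-1 : R) ^ (X - w) = (-1) ^ (X - w) * ((-1) ^ w * (-1) ^ w) := by
        rw [← pow_add, ← two_mul, pow_mul, neg_one_sq, one_pow, mul_one]
    _ = (-1) ^ X * (-1) ^ w := by rw [← mul_assoc, ← pow_add, Nat.sub_add_cancel h]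

lemma Finset.sum_Icc_tsub_reflect {M : Type*} [AddCommMonoid M] (f : ℕ → M) {y X : ℕ}
    (h : y ≤ X) : ∑ z ∈ Icc (X - y) X, f z = ∑ w ∈ Icc 0 y, f (X - w) := by
  rw [← Ico_add_one_right_eq_Icc, ← Ico_add_one_right_eq_Icc,
    sum_Ico_reflect f 0 (by omega : y + 1 ≤ X + 1), Nat.add_sub_add_right, Nat.sub_zero]

lemma sum_tetrahedron_weight_reflect (ζ : ℂ) (a b c d p i j : ℕ) {X y : ℕ} (h : y ≤ X) :
    (∑ z ∈ Icc (X - y) X,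
        (-1 : ℂ) ^ z * qfact ζ (z + 1) /
          (qfact ζ (z + a - X) * qfact ζ (z + b - X) * qfact ζ (z + c - X) *
            qfact ζ (z + d - X) * qfact ζ (X + p * i - z) * qfact ζ (X + p * j - z) *
            qfact ζ (X - z))) =
      (-1 : ℂ) ^ X * ∑ z ∈ Icc 0 y,
        (-1 : ℂ) ^ z * qfact ζ (X - z + 1) /
          (qfact ζ (a - z) * qfact ζ (b - z) * qfact ζ (c - z) * qfact ζ (d - z) *
            qfact ζ (p * i + z) * qfact ζ (p * j + z) * qfact ζ z) := by
  rw [sum_Icc_tsub_reflect _ h, mul_sum]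
  refine sum_congr rfl fun w hw => ?_
  have hwX : w ≤ X := (mem_Icc.1 hw).2.trans h
  rw [neg_one_pow_tsub hwX, show X - (X - w) = w by omega,
    show X - w + a - X = a - w by omega, show X - w + b - X = b - w by omega,
    show X - w + c - X = c - w by omega, show X - w + d - X = d - w by omega,
    show X + p * i - (X - w) = p * i + w by omega, show X + p * j - (X - w) = p * j + w by omega]
  ring

theorem tetrahedron_weight_formula_general (ζ : ℂ)
    (a b c d p i j : ℕ)
    (X : ℕ) (hX : X = p * (i + j) + a + b + c + d)
    (y : ℕ) (hy : y = min a (min b (min c d)))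
    (zm : ℕ) (hzm : zm = max (X - a) (max (X - b) (max (X - c) (X - d))))
    (zp : ℕ) (hzp : zp = min (X + p * i) (min (X + p * j) X)) :
    (∑ z ∈ Finset.Icc zm zp,
        (-1 : ℂ) ^ z * qfact ζ (z + 1) /
          (qfact ζ (z + a - X) * qfact ζ (z + b - X) * qfact ζ (z + c - X) *
            qfact ζ (z + d - X) * qfact ζ (X + p * i - z) * qfact ζ (X + p * j - z) *
            qfact ζ (X - z))) =
      (-1 : ℂ) ^ X * ∑ z ∈ Finset.Icc 0 y,
        (-1 : ℂ) ^ z * qfact ζ (X - z + 1) /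
          (qfact ζ (a - z) * qfact ζ (b - z) * qfact ζ (c - z) * qfact ζ (d - z) *
            qfact ζ (p * i + z) * qfact ζ (p * j + z) * qfact ζ z) ∧
    (y = 0 →
      (∑ z ∈ Finset.Icc zm zp,
          (-1 : ℂ) ^ z * qfact ζ (z + 1) /
            (qfact ζ (z + a - X) * qfact ζ (z + b - X) * qfact ζ (z + c - X) *
              qfact ζ (z + d - X) * qfact ζ (X + p * i - z) * qfact ζ (X + p * j - z) *
              qfact ζ (X - z))) =
        (-1 : ℂ) ^ X * qfact ζ (X + 1) /
          (qfact ζ a * qfact ζ b * qfact ζ c * qfact ζ d *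
            qfact ζ (p * i) * qfact ζ (p * j))) := by
  have hzm' : zm = X - y := by simp only [hzm, hy, antitone_const_tsub.map_min]
  have hzp' : zp = X := by simp [hzp]
  have hyX : y ≤ X := by clear hzm hzp; omega
  have reflect := sum_tetrahedron_weight_reflect ζ a b c d p i j hyX
  rw [hzm', hzp']
  refine ⟨reflect, fun hy0 => ?_⟩
  rw [reflect, hy0, Icc_self, sum_singleton]
  simp only [Nat.sub_zero, add_zero, pow_zero, one_mul, mul_one, qfact_zero, mul_div_assoc]

/-- The Turaev–Viro tetrahedron weight of a tetrahedron coloured by `a,b,c,d`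
vertex cycles and `p` balanced curves of type `(i, j, i+j)` equals the simplified
formula `(−1)^X Σ_{0 ≤ z ≤ y} (−1)^z [X−z+1]! / ([a−z]!…[z]!)`; in particular,
if `y = min{a,b,c,d} = 0` it equals `(−1)^X [X+1]! / ([a]![b]![c]![d]![pi]![pj]!)`. -/
theorem tetrahedron_weight_formula (r q : ℕ) (hr : 3 ≤ r) (hq0 : 0 < q) (hq2 : q < 2 * r)
    (hgcd : Nat.gcd r q = 1) (ζ : ℂ)
    (hζ : ζ = Complex.exp (Complex.I * Real.pi * q / r))
    (a b c d p i j : ℕ)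
    (X : ℕ) (hX : X = p * (i + j) + a + b + c + d)
    (y : ℕ) (hy : y = min a (min b (min c d)))
    (zm : ℕ) (hzm : zm = max (X - a) (max (X - b) (max (X - c) (X - d))))
    (zp : ℕ) (hzp : zp = min (X + p * i) (min (X + p * j) X)) :
    (∑ z ∈ Finset.Icc zm zp,
        (-1 : ℂ) ^ z * qfact ζ (z + 1) /
          (qfact ζ (z + a - X) * qfact ζ (z + b - X) * qfact ζ (z + c - X) *
            qfact ζ (z + d - X) * qfact ζ (X + p * i - z) * qfact ζ (X + p * j - z) *
            qfact ζ (X - z))) =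
      (-1 : ℂ) ^ X * ∑ z ∈ Finset.Icc 0 y,
        (-1 : ℂ) ^ z * qfact ζ (X - z + 1) /
          (qfact ζ (a - z) * qfact ζ (b - z) * qfact ζ (c - z) * qfact ζ (d - z) *
            qfact ζ (p * i + z) * qfact ζ (p * j + z) * qfact ζ z) ∧
    (y = 0 →
      (∑ z ∈ Finset.Icc zm zp,
          (-1 : ℂ) ^ z * qfact ζ (z + 1) /
            (qfact ζ (z + a - X) * qfact ζ (z + b - X) * qfact ζ (z + c - X) *
              qfact ζ (z + d - X) * qfact ζ (X + p * i - z) * qfact ζ (X + p * j - z) *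
              qfact ζ (X - z))) =
        (-1 : ℂ) ^ X * qfact ζ (X + 1) /
          (qfact ζ a * qfact ζ b * qfact ζ c * qfact ζ d *
            qfact ζ (p * i) * qfact ζ (p * j))) :=
  tetrahedron_weight_formula_general ζ a b c d p i j X hX y hy zm hzm zp hzp
end

section
/- Let (E,F) be a triangulation datum. Then |Adm(E,F,4)| ≤ ( Σ_{θ ∈ Adm(E,F,3), θ ≠ 0} 2^{ker_θ} ) + |Adm(E,F,3)|, where for θ ∈ Adm(E,F,3) we write ker_θ = #{e ∈ E : θ(e) = 0}, and 0 denotes the zero colouring. -/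
/-! For `r = 4` the colours are `0, 1/2, 1`. Reducing a colouring mod 1 (`θ ↦ fract ∘ θ`)
preserves integrality of the triangle sums and so lands in `Adm(E,F,3)`, which consists exactly of
the `{0, 1/2}`-valued colourings with integral triangle sums. A colouring in the fibre over `η` is
determined by `η` and by the set of edges where it equals `1`, a subset of the kernel of `η`; so
that fibre has at most `2 ^ ker η` elements. The fibre over `0` consists of `{0, 1}`-valued
colourings, and halving maps it injectively into `Adm(E,F,3)`, because the triangle inequalities
and the upper bound force each triangle sum to be `0` or `2`. -/

theorem Set.ncard_le_finsum_diff_singleton_add {α β : Type*} {s : Set α} {t : Set β}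
    {f : α → β}
    (hs : s.Finite) (ht : t.Finite) (hf : Set.MapsTo f s t) (b₀ : β) {g : β → ℕ}
    (hg : ∀ b ∈ t \ {b₀}, (s ∩ f ⁻¹' {b}).ncard ≤ g b) :
    s.ncard ≤ (∑ᶠ b ∈ t \ {b₀}, g b) + (s ∩ f ⁻¹' {b₀}).ncard := by
  classical
  obtain ⟨S, rfl⟩ := hs.exists_finset_coe
  obtain ⟨T, rfl⟩ := ht.exists_finset_coe
  have hfibre : ∀ b, (↑S ∩ f ⁻¹' {b} : Set α) = ↑(S.filter (f · = b)) := fun b => by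
    ext; simp
  have hmaps : ∀ a ∈ S, f a ∈ insert b₀ (T.erase b₀) := fun a ha =>
    Finset.insert_erase_subset b₀ T (hf ha)
  rw [← Finset.coe_erase, finsum_mem_coe_finset, hfibre, Set.ncard_coe_finset,
    Set.ncard_coe_finset, Finset.card_eq_sum_card_fiberwise hmaps,
    Finset.sum_insert (Finset.notMem_erase b₀ T), add_comm]
  gcongr with b hb
  obtain ⟨hb₀, hbT⟩ := Finset.mem_erase.1 hb
  rw [← Set.ncard_coe_finset, ← hfibre]
  exact hg b ⟨hbT, hb₀⟩

section

variable {E : Type*} {F : Multiset (E × E × E)} {θ : E → ℚ}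

variable (F) in
theorem finite_adm [Finite E] (r : ℕ) : (Adm F r).Finite := by
  refine (Set.Finite.pi' fun _ =>
    (Set.finite_Iic (r - 2)).image fun k : ℕ => (k : ℚ) / 2).subset ?_
  intro θ hθ e
  obtain ⟨k, hk, he⟩ := hθ.1 e
  exact ⟨k, hk, he.symm⟩

theorem IsAdmissible.apply_eq_zero_or_half_or_one (hθ : IsAdmissible F 4 θ) (e : E) :
    θ e = 0 ∨ θ e = 1 / 2 ∨ θ e = 1 := by
  obtain ⟨k, hk, he⟩ := hθ.1 e
  interval_cases k <;> norm_num [he]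

theorem isAdmissible_three_of_half_valued (hval : ∀ e, θ e = 0 ∨ θ e = 1 / 2)
    (hsum : ∀ t ∈ F, ∃ z : ℤ, θ t.1 + θ t.2.1 + θ t.2.2 = z) : IsAdmissible F 3 θ := by
  refine ⟨fun e => ?_, fun t ht => ⟨hsum t ht, ?_⟩⟩
  · rcases hval e with h | h
    · exact ⟨0, by norm_num, by simp [h]⟩
    · exact ⟨1, le_rfl, by simp [h]⟩
  obtain ⟨z, hz⟩ := hsum t ht
  -- doubling makes the parity condition an equation in `ℤ`, which excludes the sums `1/2, 3/2`
  have h2z : (2 * z : ℤ) = (2 * (θ t.1 + θ t.2.1 + θ t.2.2) : ℚ) := by push_cast; rw [hz]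
  rcases hval t.1 with h1 | h1 <;> rcases hval t.2.1 with h2 | h2 <;>
    rcases hval t.2.2 with h3 | h3 <;> rw [h1, h2, h3] at h2z ⊢ <;> norm_num at h2z ⊢ <;>
    norm_cast at h2z <;> omega

theorem add_add_eq_zero_or_two {a b c : ℚ} (ha : a = 0 ∨ a = 1) (hb : b = 0 ∨ b = 1)
    (hc : c = 0 ∨ c = 1) (hab : a ≤ b + c) (hbc : b ≤ a + c) (hca : c ≤ a + b)
    (hsum : a + b + c ≤ 2) : a + b + c = 0 ∨ a + b + c = 2 := by
  rcases ha with rfl | rfl <;> rcases hb with rfl | rfl <;> rcases hc with rfl | rfl <;>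
    norm_num at *

theorem IsAdmissible.div_two (hθ : IsAdmissible F 4 θ) (hval : ∀ e, θ e = 0 ∨ θ e = 1) :
    IsAdmissible F 3 (θ / 2) := by
  refine isAdmissible_three_of_half_valued (fun e => by rcases hval e with h | h <;> simp [h])
    fun t ht => ?_
  obtain ⟨-, hab, hbc, hca, hsum⟩ := hθ.2 t ht
  simp only [Pi.div_apply, Pi.ofNat_apply]
  have hsum' : θ t.1 + θ t.2.1 + θ t.2.2 ≤ 2 := by push_cast at hsum; linarith
  rcases add_add_eq_zero_or_two (hval _) (hval _) (hval _) hab hbc hca hsum' with h | h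
  · exact ⟨0, by linarith⟩
  · exact ⟨1, by push_cast; linarith⟩

theorem fract_inv_two : Int.fract (2⁻¹ : ℚ) = 2⁻¹ :=
  Int.fract_eq_self.2 ⟨by norm_num, by norm_num⟩

theorem IsAdmissible.fract_comp (hθ : IsAdmissible F 4 θ) :
    IsAdmissible F 3 (Int.fract ∘ θ) := by
  refine isAdmissible_three_of_half_valued (fun e => ?_) fun t ht => ?_
  · rcases hθ.apply_eq_zero_or_half_or_one e with h | h | h <;> simp [h, fract_inv_two]
  · obtain ⟨⟨z, hz⟩, -⟩ := hθ.2 t ht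
    refine ⟨z - ⌊θ t.1⌋ - ⌊θ t.2.1⌋ - ⌊θ t.2.2⌋, ?_⟩
    simp only [Function.comp_apply, Int.fract]
    push_cast
    linarith

theorem fract_add_ite_eq_self {x : ℚ} (hx : x = 0 ∨ x = 1 / 2 ∨ x = 1) :
    Int.fract x + (if x = 1 then 1 else 0) = x := by
  rcases hx with rfl | rfl | rfl <;> norm_num [fract_inv_two]

theorem ncard_adm_four_fract_fibre_le [Finite E] (η : E → ℚ) :
    (Adm F 4 ∩ (Int.fract ∘ ·) ⁻¹' {η}).ncard ≤ 2 ^ {e | η e = 0}.ncard := by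
  rw [← Set.ncard_powerset _ (Set.toFinite _)]
  refine Set.ncard_le_ncard_of_injOn (fun θ => {e | θ e = 1}) ?_ ?_ (Set.toFinite _)
  · rintro θ ⟨-, hη⟩ e (he : θ e = 1)
    rw [← show Int.fract ∘ θ = η from hη]
    simp [he]
  · rintro θ₁ ⟨h₁, hη₁⟩ θ₂ ⟨h₂, hη₂⟩ hT
    funext e
    rw [← fract_add_ite_eq_self (h₁.apply_eq_zero_or_half_or_one e),
      ← fract_add_ite_eq_self (h₂.apply_eq_zero_or_half_or_one e)]
    have hfract : Int.fract (θ₁ e) = Int.fract (θ₂ e) :=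
      (congrFun hη₁ e).trans (congrFun hη₂ e).symm
    have hone : θ₁ e = 1 ↔ θ₂ e = 1 := Set.ext_iff.1 hT e
    simp only [hfract, hone]

theorem ncard_adm_four_fract_fibre_zero_le [Finite E] :
    (Adm F 4 ∩ (Int.fract ∘ ·) ⁻¹' {0}).ncard ≤ (Adm F 3).ncard := by
  refine Set.ncard_le_ncard_of_injOn (· / 2) ?_ ?_ (finite_adm F 3)
  · rintro θ ⟨hθ, hη⟩
    refine IsAdmissible.div_two hθ fun e => ?_
    have h0 : Int.fract (θ e) = 0 := congrFun hη e
    rcases hθ.apply_eq_zero_or_half_or_one e with h | h | h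
    · exact .inl h
    · simp [h, fract_inv_two] at h0
    · exact .inr h
  · intro θ₁ _ θ₂ _ h
    funext e
    simpa using congrFun h e

end

/-- `|Adm(E,F,4)| ≤ Σ_{θ ∈ Adm(E,F,3), θ ≠ 0} 2^{ker_θ} + |Adm(E,F,3)|`, where
`ker_θ` is the number of edges coloured `0` by `θ`. -/
theorem adm_four_card_le {E : Type*} [Fintype E] (F : Multiset (E × E × E)) :
    (Adm F 4).ncard ≤
      (∑ᶠ θ ∈ Adm F 3 \ {(0 : E → ℚ)}, 2 ^ ({e : E | θ e = 0}.ncard)) +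
        (Adm F 3).ncard := by
  calc (Adm F 4).ncard
      ≤ (∑ᶠ η ∈ Adm F 3 \ {0}, 2 ^ {e : E | η e = 0}.ncard) +
          (Adm F 4 ∩ (Int.fract ∘ ·) ⁻¹' {0}).ncard :=
        Set.ncard_le_finsum_diff_singleton_add (finite_adm F 4) (finite_adm F 3)
          (fun _ => IsAdmissible.fract_comp) 0 fun η _ => ncard_adm_four_fract_fibre_le η
    _ ≤ _ := by grw [ncard_adm_four_fract_fibre_zero_le]
end

section
/- Let (E,F) be a triangulation datum with E nonempty. Then |Adm(E,F,4)| ≤ (|Adm(E,F,3)| − 1)·(2^{|E|−1} + 1) + 1. -/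
/-!
An admissible colouring `θ` for `r = 4` takes values in `{0, 1/2, 1}`. Keeping only its halves
gives an admissible colouring for `r = 3`: parity forces an even number of halves on each
triangle. Over the zero colouring the fibre of this map consists of `{0, 1}`-valued colourings,
and `θ ↦ θ / 2` embeds it in `Adm F 3`. Over any other `y`, `θ` is `1/2` where `y ≠ 0` and is
free in `{0, 1}` on the fewer than `|E|` remaining edges, so that fibre has at most
`2 ^ (|E| - 1)` elements.
-/

open Finset

theorem Finset.card_le_of_card_fiber_le {α β : Type*} [DecidableEq β] {s : Finset α}
    {t : Finset β} {f : α → β} (hf : ∀ x ∈ s, f x ∈ t) {y₀ : β} (hy₀ : y₀ ∈ t) {a b : ℕ}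
    (h₀ : #{x ∈ s | f x = y₀} ≤ a) (h : ∀ y ∈ t, y ≠ y₀ → #{x ∈ s | f x = y} ≤ b) :
    #s ≤ (#t - 1) * b + a := by
  rw [card_eq_sum_card_fiberwise hf, ← sum_erase_add _ _ hy₀, ← card_erase_of_mem hy₀]
  refine add_le_add ?_ h₀
  simpa using sum_le_card_nsmul _ _ _ fun y hy => h y (mem_of_mem_erase hy) (ne_of_mem_erase hy)

/-- The conditions `IsAdmissible` imposes on a triangle coloured `a, b, c`. -/
def IsAdmissibleTriple (r : ℕ) (a b c : ℚ) : Prop :=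
  (∃ z : ℤ, a + b + c = (z : ℚ)) ∧ a ≤ b + c ∧ b ≤ a + c ∧ c ≤ a + b ∧ a + b + c ≤ (r : ℚ) - 2

def halfPart (q : ℚ) : ℚ := if q = 1 / 2 then 1 / 2 else 0

theorem halfPart_eq_zero_iff {q : ℚ} : halfPart q = 0 ↔ q ≠ 1 / 2 := by
  simp [halfPart]

theorem isAdmissibleTriple_halfPart {a b c : ℚ} (ha : a ∈ ({0, 1/2, 1} : Set ℚ))
    (hb : b ∈ ({0, 1/2, 1} : Set ℚ)) (hc : c ∈ ({0, 1/2, 1} : Set ℚ))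
    (h : IsAdmissibleTriple 4 a b c) :
    IsAdmissibleTriple 3 (halfPart a) (halfPart b) (halfPart c) := by
  obtain ⟨⟨z, hz⟩, -⟩ := h
  simp only [Set.mem_insert_iff, Set.mem_singleton_iff] at ha hb hc
  rcases ha with rfl | rfl | rfl <;> rcases hb with rfl | rfl | rfl <;>
    rcases hc with rfl | rfl | rfl <;>
    norm_num [IsAdmissibleTriple, halfPart] at hz ⊢
  all_goals first
    | exact ⟨0, Int.cast_zero.symm⟩
    | exact ⟨1, Int.cast_one.symm⟩
    | (field_simp at hz; norm_cast at hz; omega)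

theorem isAdmissibleTriple_div_two {a b c : ℚ} (ha : a ∈ ({0, 1} : Set ℚ))
    (hb : b ∈ ({0, 1} : Set ℚ)) (hc : c ∈ ({0, 1} : Set ℚ))
    (h : IsAdmissibleTriple 4 a b c) :
    IsAdmissibleTriple 3 (a / 2) (b / 2) (c / 2) := by
  obtain ⟨-, hab, hbc, hca, hsum⟩ := h
  simp only [Set.mem_insert_iff, Set.mem_singleton_iff] at ha hb hc
  rcases ha with rfl | rfl <;> rcases hb with rfl | rfl <;> rcases hc with rfl | rfl <;>
    norm_num [IsAdmissibleTriple] at *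
  all_goals first
    | exact ⟨0, Int.cast_zero.symm⟩
    | exact ⟨1, Int.cast_one.symm⟩

theorem eq_of_halfPart_eq_of_eq_one_iff {p q : ℚ} (hp : p ∈ ({0, 1/2, 1} : Set ℚ))
    (hq : q ∈ ({0, 1/2, 1} : Set ℚ)) (hhalf : halfPart p = halfPart q) (hone : p = 1 ↔ q = 1) :
    p = q := by
  simp only [Set.mem_insert_iff, Set.mem_singleton_iff] at hp hq
  rcases hp with rfl | rfl | rfl <;> rcases hq with rfl | rfl | rfl <;>
    norm_num [halfPart] at *

section Colouring

variable {E : Type*} {F : Multiset (E × E × E)} {r s : ℕ} {θ : E → ℚ}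

theorem Adm.finite [Finite E] (F : Multiset (E × E × E)) (r : ℕ) : (Adm F r).Finite := by
  have hcol :
      Adm F r ⊆ Set.pi Set.univ fun _ : E => (fun k : ℕ => (k : ℚ) / 2) '' Set.Iic (r - 2) :=
    fun θ hθ e _ => by
      obtain ⟨k, hk, h⟩ := hθ.1 e
      exact ⟨k, hk, h.symm⟩
  exact (Set.Finite.pi fun _ => (Set.finite_Iic _).image _).subset hcol

theorem zero_mem_adm (F : Multiset (E × E × E)) (hr : 2 ≤ r) : (0 : E → ℚ) ∈ Adm F r := by
  refine ⟨fun _ => ⟨0, Nat.zero_le _, by simp⟩, fun _ _ => ⟨⟨0, by simp⟩, ?_⟩⟩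
  have : (2 : ℚ) ≤ r := by exact_mod_cast hr
  simp only [Pi.zero_apply, add_zero, le_refl, true_and]
  linarith

theorem comp_mem_adm {S : Set ℚ} {g : ℚ → ℚ} (hθ : θ ∈ Adm F r) (hS : ∀ e, θ e ∈ S)
    (hcol : ∀ q ∈ S, ∃ k : ℕ, k ≤ s - 2 ∧ g q = (k : ℚ) / 2)
    (htri : ∀ a ∈ S, ∀ b ∈ S, ∀ c ∈ S, IsAdmissibleTriple r a b c →
      IsAdmissibleTriple s (g a) (g b) (g c)) :
    g ∘ θ ∈ Adm F s :=
  ⟨fun e => hcol _ (hS e), fun t ht => htri _ (hS _) _ (hS _) _ (hS _) (hθ.2 t ht)⟩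

theorem mem_adm_four_apply (hθ : θ ∈ Adm F 4) (e : E) : θ e ∈ ({0, 1/2, 1} : Set ℚ) := by
  obtain ⟨k, hk, h⟩ := hθ.1 e
  interval_cases k <;> simp [h]

theorem halfPart_comp_mem_adm_three (hθ : θ ∈ Adm F 4) : halfPart ∘ θ ∈ Adm F 3 := by
  refine comp_mem_adm hθ (mem_adm_four_apply hθ) (fun q _ => ?_)
    (fun a ha b hb c hc => isAdmissibleTriple_halfPart ha hb hc)
  by_cases hq : q = 1 / 2
  · exact ⟨1, le_rfl, by rw [halfPart, if_pos hq]; simp⟩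
  · exact ⟨0, Nat.zero_le _, by rw [halfPart, if_neg hq]; simp⟩

theorem div_two_mem_adm_three (hθ : θ ∈ Adm F 4) (hθ0 : halfPart ∘ θ = 0) :
    (· / 2) ∘ θ ∈ Adm F 3 := by
  have hS (e : E) : θ e ∈ ({0, 1} : Set ℚ) := by
    have := halfPart_eq_zero_iff.1 (congrFun hθ0 e)
    have := mem_adm_four_apply hθ e
    aesop
  refine comp_mem_adm hθ hS (fun q hq => ?_)
    (fun a ha b hb c hc => isAdmissibleTriple_div_two ha hb hc)
  rcases hq with rfl | rfl
  · exact ⟨0, Nat.zero_le _, by simp⟩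
  · exact ⟨1, le_rfl, by simp⟩

theorem card_filter_halfPart_comp_eq_le [Fintype E] {A : Finset (E → ℚ)}
    (hA : ∀ θ ∈ A, ∀ e, θ e ∈ ({0, 1/2, 1} : Set ℚ)) {y : E → ℚ} (hy : y ≠ 0) :
    #{θ ∈ A | halfPart ∘ θ = y} ≤ 2 ^ (Fintype.card E - 1) := by
  classical
  obtain ⟨e₀, he₀⟩ : ∃ e, y e ≠ 0 := Function.ne_iff.1 hy
  calc #{θ ∈ A | halfPart ∘ θ = y}
      ≤ Fintype.card ({e // y e = 0} → Bool) := by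
        refine card_le_card_of_injOn (fun θ e => decide (θ e.1 = 1)) (by simp) ?_
        intro θ₁ h₁ θ₂ h₂ hcode
        simp only [coe_filter, Set.mem_ofPred_eq] at h₁ h₂
        funext e
        refine eq_of_halfPart_eq_of_eq_one_iff (hA _ h₁.1 e) (hA _ h₂.1 e)
          (by simp only [← Function.comp_apply (f := halfPart), h₁.2, h₂.2]) ?_
        by_cases hye : y e = 0
        · simpa using congrFun hcode ⟨e, hye⟩
        · have half (θ : E → ℚ) (hθ : halfPart ∘ θ = y) : θ e = 1 / 2 := by
            by_contra hne
            exact hye (hθ ▸ halfPart_eq_zero_iff.2 hne)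
          rw [half θ₁ h₁.2, half θ₂ h₂.2]
    _ = 2 ^ Fintype.card {e // y e = 0} := by simp
    _ ≤ 2 ^ (Fintype.card E - 1) :=
        Nat.pow_le_pow_right two_pos (Nat.le_sub_one_of_lt (Fintype.card_subtype_lt he₀))

end Colouring

theorem adm_four_card_le_of_adm_three_general {E : Type*} [Fintype E]
    (F : Multiset (E × E × E)) :
    (Adm F 4).ncard ≤
      ((Adm F 3).ncard - 1) * (2 ^ (Fintype.card E - 1) + 1) + 1 := by
  classical
  set A₃ := (Adm.finite F 3).toFinset
  set A₄ := (Adm.finite F 4).toFinset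
  rw [Set.ncard_eq_toFinset_card _ (Adm.finite F 4),
    Set.ncard_eq_toFinset_card _ (Adm.finite F 3)]
  have h₀ : (0 : E → ℚ) ∈ A₃ := by simpa [A₃] using zero_mem_adm F (r := 3) (by norm_num)
  have hfibres : #A₄ ≤ (#A₃ - 1) * 2 ^ (Fintype.card E - 1) + #A₃ := by
    refine card_le_of_card_fiber_le (f := (halfPart ∘ ·)) (by simpa [A₃, A₄] using
      fun θ => halfPart_comp_mem_adm_three) h₀ ?_ fun y _ hy => ?_
    · refine card_le_card_of_injOn ((· / 2) ∘ ·) (fun θ hθ => ?_) fun θ₁ _ θ₂ _ h => ?_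
      · simp only [coe_filter, Set.mem_ofPred_eq, Set.Finite.mem_toFinset, A₄] at hθ
        simpa [A₃] using div_two_mem_adm_three hθ.1 hθ.2
      · funext e
        simpa using congrFun h e
    · exact card_filter_halfPart_comp_eq_le (by simpa [A₄] using fun θ => mem_adm_four_apply) hy
  obtain ⟨m, hm⟩ := Nat.exists_eq_add_one_of_ne_zero (card_ne_zero_of_mem h₀)
  rw [hm] at hfibres ⊢
  simp only [Nat.add_sub_cancel] at hfibres ⊢
  linarith

/-- `|Adm(E,F,4)| ≤ (|Adm(E,F,3)| − 1)·(2^{|E|−1} + 1) + 1` for a triangulation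
datum with nonempty edge set. -/
theorem adm_four_card_le_of_adm_three {E : Type*} [Fintype E] [Nonempty E]
    (F : Multiset (E × E × E)) :
    (Adm F 4).ncard ≤
      ((Adm F 3).ncard - 1) * (2 ^ (Fintype.card E - 1) + 1) + 1 :=
  adm_four_card_le_of_adm_three_general F
end

section
/- Let (E,F) be a triangulation datum such that the zero colouring is the only element of Adm(E,F,3), and let r ≥ 3 be an integer. Then every θ ∈ Adm(E,F,r) takes only integer values, and consequently |Adm(E,F,r)| ≤ ⌊r/2⌋^{|E|}. -/
/-- If the zero colouring is the only element of `Adm(E,F,3)`, then every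
colouring in `Adm(E,F,r)` is integer-valued, and `|Adm(E,F,r)| ≤ ⌊r/2⌋^{|E|}`. -/
theorem adm_integer_and_card_le {E : Type*} [Fintype E] (F : Multiset (E × E × E))
    (r : ℕ) (hr : 3 ≤ r) (h : Adm F 3 = {(0 : E → ℚ)}) :
    (∀ θ ∈ Adm F r, ∀ e : E, ∃ z : ℤ, θ e = (z : ℚ)) ∧
    (Adm F r).ncard ≤ (r / 2) ^ Fintype.card E := by
  have hint : ∀ θ ∈ Adm F r, ∀ e : E, ∃ z : ℤ, θ e = (z : ℚ) := by
    intro θ hθ e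
    set τ : E → ℚ := fun e => Int.fract (θ e) with hτdef
    have hvals : ∀ e, τ e = 0 ∨ τ e = 1 / 2 := by
      intro e
      obtain ⟨k, hk, hke⟩ := hθ.1 e
      rcases Nat.even_or_odd k with ⟨m, hm⟩ | ⟨m, hm⟩
      · left
        have : θ e = ((m : ℤ) : ℚ) := by rw [hke, hm]; push_cast; ring
        simp [hτdef, this, Int.fract_intCast]
      · right
        have : θ e = ((m : ℤ) : ℚ) + 1 / 2 := by rw [hke, hm]; push_cast; ring
        rw [hτdef]
        simp only [this, Int.fract_intCast_add]
        exact Int.fract_eq_self.2 (by norm_num)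
    have hτadm : τ ∈ Adm F 3 := by
      constructor
      · intro e
        rcases hvals e with h0 | h1
        · exact ⟨0, by norm_num, by simpa using h0⟩
        · exact ⟨1, by norm_num, by simpa using h1⟩
      · intro t ht
        obtain ⟨⟨z, hz⟩, h1, h2, h3, h4⟩ := hθ.2 t ht
        have hparity : ∃ w : ℤ,
            τ t.1 + τ t.2.1 + τ t.2.2 = (w : ℚ) := by
          refine ⟨z - ⌊θ t.1⌋ - ⌊θ t.2.1⌋ - ⌊θ t.2.2⌋, ?_⟩
          simp only [hτdef, Int.fract]
          push_cast
          linarith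
        refine ⟨hparity, ?_⟩
        obtain ⟨w, hw⟩ := hparity
        have h2w : (2 * w : ℚ) = 2 * (τ t.1 + τ t.2.1 + τ t.2.2) := by
          rw [hw]
        have hbad : ∀ c : ℚ, 2 * c = 2 * (w : ℚ) → (c = 1/2 ∨ c = 3/2) → False := by
          intro c hc hcase
          have : (2 * w : ℤ) = 1 ∨ (2 * w : ℤ) = 3 := by
            rcases hcase with hcc | hcc
            · left
              exact_mod_cast (show ((2 * w : ℤ) : ℚ) = 1 by push_cast; linarith)
            · right
              exact_mod_cast (show ((2 * w : ℤ) : ℚ) = 3 by push_cast; linarith)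
          omega
        rcases hvals t.1 with ha | ha <;> rcases hvals t.2.1 with hb | hb <;>
            rcases hvals t.2.2 with hc | hc <;>
            rw [ha, hb, hc] at h2w ⊢
        · norm_num
        · exact absurd (hbad _ h2w.symm (by norm_num)) not_false
        · exact absurd (hbad _ h2w.symm (by norm_num)) not_false
        · norm_num
        · exact absurd (hbad _ h2w.symm (by norm_num)) not_false
        · norm_num
        · norm_num
        · exact absurd (hbad _ h2w.symm (by norm_num)) not_false
    have hτ0 : τ = 0 := by
      rw [h] at hτadm
      simpa using hτadm
    have : Int.fract (θ e) = 0 := by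
      have := congrFun hτ0 e
      simpa [hτdef] using this
    refine ⟨⌊θ e⌋, ?_⟩
    have hfl := Int.floor_add_fract (θ e)
    rw [this, add_zero] at hfl
    exact hfl.symm
  refine ⟨hint, ?_⟩
  classical
  set f : (E → Fin (r / 2)) → (E → ℚ) := fun g e => ((g e : ℕ) : ℚ) with hfdef
  have hsub : Adm F r ⊆ Set.range f := by
    intro θ hθ
    choose z hz using hint θ hθ
    have hbound : ∀ e, 0 ≤ z e ∧ (z e).toNat < r / 2 := by
      intro e
      obtain ⟨k, hk, hke⟩ := hθ.1 e
      have hkz : (k : ℤ) = 2 * z e := by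
        have : (k : ℚ) = 2 * (z e : ℚ) := by
          have := hz e
          rw [hke] at this
          linarith
        exact_mod_cast this
      omega
    refine ⟨fun e => ⟨(z e).toNat, (hbound e).2⟩, ?_⟩
    funext e
    simp only [hfdef]
    rw [hz e]
    have := (hbound e).1
    norm_cast
    omega
  have hrange : Set.range f = ↑(Finset.univ.image f) := by
    simp
  calc (Adm F r).ncard ≤ (Set.range f).ncard :=
        Set.ncard_le_ncard hsub (Set.finite_range f)
    _ = (Finset.univ.image f).card := by rw [hrange, Set.ncard_coe_finset]
    _ ≤ Fintype.card (E → Fin (r / 2)) := by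
        simpa using Finset.card_image_le (s := Finset.univ) (f := f)
    _ = (r / 2) ^ Fintype.card E := by simp [Fintype.card_fun]
end

section
/- Let (E,F) be a triangulation datum such that: E is nonempty; every e ∈ E occurs as an entry of some triple in F; the reflexive–transitive closure of the relation 'e and e′ occur as entries of a common triple of F' relates any two elements of E; and the zero colouring is the only element of Adm(E,F,3). Then |Adm(E,F,5)| ≤ 2^{|E|−1} + 1. -/
/-!
Reducing an admissible colouring mod 1 gives a colouring with values in `{0, 1/2}` that is
admissible for `r = 3`. Since `Adm(E,F,3) = {0}`, every colouring in `Adm(E,F,5)` therefore takes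
values in `{0, 1}`: it is the indicator of a set `S` of edges such that no triangle has exactly one
edge in `S`. If `Sᶜ` has the same property, no triangle meets both `S` and `Sᶜ`, so by connectivity
`S = ∅` or `S = E`. Hence the nonempty such sets contain no complementary pair, and there are at
most `2^(|E|-1)` of them.
-/

open Set

section

variable {E : Type*} {F : Multiset (E × E × E)} {r : ℕ}

lemma isAdmissible_half_iff (hr : 2 ≤ r) (k : E → ℕ) :
    IsAdmissible F r (fun e => (k e : ℚ) / 2) ↔
      (∀ e, k e ≤ r - 2) ∧
      ∀ t ∈ F, Even (k t.1 + k t.2.1 + k t.2.2) ∧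
        k t.1 ≤ k t.2.1 + k t.2.2 ∧ k t.2.1 ≤ k t.1 + k t.2.2 ∧ k t.2.2 ≤ k t.1 + k t.2.1 ∧
        k t.1 + k t.2.1 + k t.2.2 ≤ 2 * (r - 2) := by
  have half_le_half (a b : ℕ) : (a : ℚ) / 2 ≤ b / 2 ↔ a ≤ b := by
    rw [div_le_div_iff_of_pos_right two_pos, Nat.cast_le]
  have half_eq_half (a b : ℕ) : (a : ℚ) / 2 = b / 2 ↔ a = b := by
    rw [div_left_inj' two_ne_zero, Nat.cast_inj]
  have half_isInt (a : ℕ) : (∃ z : ℤ, (a : ℚ) / 2 = z) ↔ Even a := by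
    rw [← Int.even_coe_nat]
    constructor
    · rintro ⟨z, hz⟩
      exact ⟨z, by exact_mod_cast (by linarith : (a : ℚ) = z + z)⟩
    · rintro ⟨z, hz⟩
      exact ⟨z, by rw [← Int.cast_natCast, hz]; push_cast; ring⟩
  have bound : (r : ℚ) - 2 = ((2 * (r - 2) : ℕ) : ℚ) / 2 := by
    push_cast [Nat.cast_sub hr]; ring
  simp only [IsAdmissible, half_eq_half, exists_eq_right', ← add_div, ← Nat.cast_add, half_isInt,
    half_le_half, bound]

lemma exists_eq_half_of_mem_adm {θ : E → ℚ} (hθ : θ ∈ Adm F r) :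
    ∃ k : E → ℕ, θ = fun e => (k e : ℚ) / 2 := by
  choose k hk using hθ.1
  exact ⟨k, funext fun e => (hk e).2⟩

lemma parity_mem_adm_three (hr : 2 ≤ r) {k : E → ℕ} (hk : (fun e => (k e : ℚ) / 2) ∈ Adm F r) :
    (fun e => ((k e % 2 : ℕ) : ℚ) / 2) ∈ Adm F 3 := by
  simp only [Adm, mem_ofPred_eq, isAdmissible_half_iff hr,
    isAdmissible_half_iff (show 2 ≤ 3 by norm_num), Nat.even_iff] at hk ⊢
  refine ⟨fun e => by omega, fun t ht => ?_⟩
  have := hk.2 t ht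
  omega

lemma even_of_adm_three_eq_singleton (h3 : Adm F 3 = {0}) (hr : 2 ≤ r) {k : E → ℕ}
    (hk : (fun e => (k e : ℚ) / 2) ∈ Adm F r) (e : E) : Even (k e) := by
  have h := congrFun (h3 ▸ parity_mem_adm_three hr hk : _ = _) e
  simp only [Pi.zero_apply, div_eq_zero_iff, Nat.cast_eq_zero, two_ne_zero, or_false] at h
  exact Nat.even_iff.2 h

lemma eq_zero_or_eq_one_of_mem_adm_five (h3 : Adm F 3 = {0}) {θ : E → ℚ} (hθ : θ ∈ Adm F 5)
    (e : E) : θ e = 0 ∨ θ e = 1 := by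
  obtain ⟨k, rfl⟩ := exists_eq_half_of_mem_adm hθ
  have h_even := Nat.even_iff.1 (even_of_adm_three_eq_singleton h3 (by norm_num) hθ e)
  have h_le := ((isAdmissible_half_iff (by norm_num) k).1 hθ).1 e
  obtain h | h : k e = 0 ∨ k e = 2 := by omega
  all_goals simp [h]

lemma eq_indicator_of_mem_adm_five (h3 : Adm F 3 = {0}) {θ : E → ℚ} (hθ : θ ∈ Adm F 5) :
    θ = {e | θ e = 1}.indicator 1 := by
  ext e
  rcases eq_zero_or_eq_one_of_mem_adm_five h3 hθ e with h | h <;> simp [h]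

def IsEntry (e : E) (t : E × E × E) : Prop := e = t.1 ∨ e = t.2.1 ∨ e = t.2.2

lemma mem_iff_mem_of_indicator_mem_adm {S : Set E} (hS : S.indicator 1 ∈ Adm F r)
    (hSc : Sᶜ.indicator 1 ∈ Adm F r) {t : E × E × E} (ht : t ∈ F) {e e' : E}
    (he : IsEntry e t) (he' : IsEntry e' t) : e ∈ S ↔ e' ∈ S := by
  obtain ⟨-, h₁, h₂, h₃, -⟩ := hS.2 t ht
  obtain ⟨-, hc₁, hc₂, hc₃, -⟩ := hSc.2 t ht
  have h_entries : (t.1 ∈ S ↔ t.2.1 ∈ S) ∧ (t.2.1 ∈ S ↔ t.2.2 ∈ S) := by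
    by_cases a : t.1 ∈ S <;> by_cases b : t.2.1 ∈ S <;> by_cases c : t.2.2 ∈ S <;>
      simp [a, b, c] at h₁ h₂ h₃ hc₁ hc₂ hc₃ ⊢ <;> linarith
  rcases he with rfl | rfl | rfl <;> rcases he' with rfl | rfl | rfl <;> tauto

lemma eq_empty_or_eq_univ_of_indicator_mem_adm
    (hconn : ∀ e e' : E, Relation.ReflTransGen (fun x y => ∃ t ∈ F, IsEntry x t ∧ IsEntry y t) e e')
    {S : Set E} (hS : S.indicator 1 ∈ Adm F r) (hSc : Sᶜ.indicator 1 ∈ Adm F r) :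
    S = ∅ ∨ S = univ := by
  refine S.eq_empty_or_nonempty.imp_right fun ⟨e, he⟩ => eq_univ_of_forall fun e' => ?_
  induction hconn e e' with
  | refl => exact he
  | tail _ hxy ih =>
    obtain ⟨t, ht, hx, hy⟩ := hxy
    exact (mem_iff_mem_of_indicator_mem_adm hS hSc ht hx hy).1 ih

lemma two_mul_ncard_le_of_compl_notMem {α : Type*} [BooleanAlgebra α] [Finite α] {𝒜 : Set α}
    (h : ∀ a ∈ 𝒜, aᶜ ∉ 𝒜) : 2 * 𝒜.ncard ≤ Nat.card α := by
  have hdisj : Disjoint 𝒜 (compl '' 𝒜) := by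
    rw [disjoint_left]
    rintro _ ha ⟨b, hb, rfl⟩
    exact h b hb ha
  calc 2 * 𝒜.ncard = (𝒜 ∪ compl '' 𝒜).ncard := by
        rw [ncard_union_eq hdisj, ncard_image_of_injective _ compl_injective, two_mul]
    _ ≤ Nat.card α := ncard_le_card _

end

theorem adm_five_card_le_general {E : Type*} [Fintype E]
    (F : Multiset (E × E × E))
    (hconn : ∀ e e' : E,
      Relation.ReflTransGen
        (fun x y : E => ∃ t ∈ F,
          (x = t.1 ∨ x = t.2.1 ∨ x = t.2.2) ∧ (y = t.1 ∨ y = t.2.1 ∨ y = t.2.2))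
        e e')
    (h3 : Adm F 3 = {(0 : E → ℚ)}) :
    (Adm F 5).ncard ≤ 2 ^ (Fintype.card E - 1) + 1 := by
  set 𝒮 : Set (Set E) := (fun S => S.indicator 1) ⁻¹' Adm F 5
  have h_card : 𝒮.ncard = (Adm F 5).ncard :=
    ncard_preimage_of_injective_subset_range (fun _ _ => indicator_one_inj ℚ)
      fun θ hθ => ⟨_, (eq_indicator_of_mem_adm_five h3 hθ).symm⟩
  have h_compl : ∀ S ∈ 𝒮 \ {∅}, Sᶜ ∉ 𝒮 \ {∅} := by
    rintro S ⟨hS, hS0⟩ ⟨hSc, hSc0⟩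
    rcases eq_empty_or_eq_univ_of_indicator_mem_adm hconn hS hSc with h | h
    · exact hS0 h
    · exact hSc0 (h ▸ compl_univ)
  have h_half := two_mul_ncard_le_of_compl_notMem h_compl
  rw [Nat.card_eq_fintype_card, Fintype.card_set] at h_half
  have h_pred := pred_ncard_le_ncard_sdiff_singleton 𝒮 ∅
  have h_pow : 2 ^ Fintype.card E ≤ 2 * 2 ^ (Fintype.card E - 1) := by
    rw [← pow_succ']
    exact Nat.pow_le_pow_right two_pos (by omega)
  omega

/-- For a triangulation datum with nonempty edge set in which every edge occurs
in some triple, the triples connect the edge set, and the zero colouring is the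
only element of `Adm(E,F,3)`, the stated bound on `|Adm(E,F,5)|` holds. -/
theorem adm_five_card_le {E : Type*} [Fintype E] [Nonempty E]
    (F : Multiset (E × E × E))
    (hcover : ∀ e : E, ∃ t ∈ F, e = t.1 ∨ e = t.2.1 ∨ e = t.2.2)
    (hconn : ∀ e e' : E,
      Relation.ReflTransGen
        (fun x y : E => ∃ t ∈ F,
          (x = t.1 ∨ x = t.2.1 ∨ x = t.2.2) ∧ (y = t.1 ∨ y = t.2.1 ∨ y = t.2.2))
        e e')
    (h3 : Adm F 3 = {(0 : E → ℚ)}) :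
    (Adm F 5).ncard ≤ 2 ^ (Fintype.card E - 1) + 1 :=
  adm_five_card_le_general F hconn h3
end

section
/- Let (E,F) be a triangulation datum such that: E is nonempty; every e ∈ E occurs as an entry of some triple in F; the reflexive–transitive closure of the relation 'e and e′ occur as entries of a common triple of F' relates any two elements of E; and the zero colouring is the only element of Adm(E,F,3). Then |Adm(E,F,6)| ≤ 3^{|E|−1} + 1. -/
/-!
The fractional part of a colouring admissible for any `r` is `{0, 1/2}`-valued with integral
sums on the triples, hence admissible for `r = 3`, hence zero. So every colouring in `Adm F 6`
takes values in `{0, 1, 2}` and is a map `w : E → ZMod 3`. If `w` and `w + 1` are both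
admissible, each triple of `w` is `(0,0,0)` or a permutation of `(1,1,2)`; the half-indicator of
the colour `1`, and then that of the nonzero colours, is again admissible for `r = 3`, which
forces `w = 0`. Hence the constant shifts by `ZMod 3` carry the nonzero admissible colourings to
`3 (|Adm F 6| - 1)` distinct maps `E → ZMod 3`.
-/

section Colourings

variable {E : Type*} {F : Multiset (E × E × E)}

lemma mem_adm_three_of_half_valued {η : E → ℚ} (hη : ∀ e, η e = 0 ∨ η e = 1 / 2)
    (hpar : ∀ t ∈ F, ∃ z : ℤ, η t.1 + η t.2.1 + η t.2.2 = z) : η ∈ Adm F 3 := by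
  refine ⟨fun e => ?_, fun t ht => ?_⟩
  · rcases hη e with h | h
    · exact ⟨0, by norm_num, by simp [h]⟩
    · exact ⟨1, by norm_num, by simp [h]⟩
  obtain ⟨z, hz⟩ := hpar t ht
  have hbound : ∀ e, 0 ≤ η e ∧ η e ≤ 1 / 2 := fun e => by
    rcases hη e with h | h <;> norm_num [h]
  have hz01 : z = 0 ∨ z = 1 := by
    have : (0 : ℚ) ≤ z ∧ (z : ℚ) < 2 := by
      constructor <;> linarith [hbound t.1, hbound t.2.1, hbound t.2.2]
    have : 0 ≤ z ∧ z < 2 := by exact_mod_cast this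
    omega
  refine ⟨⟨z, hz⟩, ?_⟩
  rcases hz01 with rfl | rfl <;> rcases hη t.1 with h1 | h1 <;> rcases hη t.2.1 with h2 | h2 <;>
    rcases hη t.2.2 with h3 | h3 <;> revert hz <;> norm_num [h1, h2, h3]

lemma eq_zero_of_half_valued (h3 : Adm F 3 ⊆ {0}) {η : E → ℚ}
    (hη : ∀ e, η e = 0 ∨ η e = 1 / 2)
    (hpar : ∀ t ∈ F, ∃ z : ℤ, η t.1 + η t.2.1 + η t.2.2 = z) : η = 0 :=
  h3 (mem_adm_three_of_half_valued hη hpar)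

lemma exists_intCast_eq_of_mem_adm (h3 : Adm F 3 ⊆ {0}) {r : ℕ} {θ : E → ℚ}
    (hθ : θ ∈ Adm F r) (e : E) : ∃ z : ℤ, θ e = z := by
  have hfract : (fun e => Int.fract (θ e)) = 0 := by
    refine eq_zero_of_half_valued h3 (fun e => ?_) (fun t ht => ?_)
    · obtain ⟨k, -, hk⟩ := hθ.1 e
      obtain ⟨m, rfl | rfl⟩ := Nat.even_or_odd' k
      · left
        rw [hk]
        exact Int.fract_eq_zero_iff.mpr ⟨m, by push_cast; ring⟩
      · right
        rw [hk, Int.fract_eq_iff]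
        refine ⟨by norm_num, by norm_num, m, ?_⟩
        push_cast; ring
    · obtain ⟨⟨z, hz⟩, -⟩ := hθ.2 t ht
      refine ⟨z - ⌊θ t.1⌋ - ⌊θ t.2.1⌋ - ⌊θ t.2.2⌋, ?_⟩
      simp only [← Int.self_sub_floor]
      push_cast; linarith
  exact (Int.fract_eq_zero_iff.mp (congrFun hfract e)).imp fun _ => Eq.symm

def toColouring (w : E → ZMod 3) : E → ℚ := fun e => (w e).val

lemma toColouring_injective : Function.Injective (toColouring : (E → ZMod 3) → E → ℚ) :=
  fun _ _ h => funext fun e => ZMod.val_injective 3 (Nat.cast_injective (congrFun h e))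

lemma mem_range_toColouring_of_mem_adm_six (h3 : Adm F 3 ⊆ {0}) {θ : E → ℚ}
    (hθ : θ ∈ Adm F 6) : θ ∈ Set.range (toColouring : (E → ZMod 3) → E → ℚ) := by
  have hval : ∀ e, ∃ m : ZMod 3, θ e = m.val := fun e => by
    obtain ⟨k, hk4, hk⟩ := hθ.1 e
    obtain ⟨z, hz⟩ := exists_intCast_eq_of_mem_adm h3 hθ e
    have hkz : ((k : ℤ) : ℚ) = 2 * z := by push_cast; rw [← hz, hk]; ring
    have hkz : (k : ℤ) = 2 * z := by exact_mod_cast hkz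
    have : z = 0 ∨ z = 1 ∨ z = 2 := by omega
    rcases this with rfl | rfl | rfl
    exacts [⟨0, by rw [hz]; rfl⟩, ⟨1, by rw [hz]; rfl⟩, ⟨2, by rw [hz]; rfl⟩]
  choose w hw using hval
  exact ⟨w, funext fun e => (hw e).symm⟩

abbrev IsBoundedTriangle (n a b c : ℕ) : Prop :=
  a ≤ b + c ∧ b ≤ a + c ∧ c ≤ a + b ∧ a + b + c ≤ n

lemma isBoundedTriangle_of_toColouring_mem_adm_six {w : E → ZMod 3}
    (hw : toColouring w ∈ Adm F 6) {t : E × E × E} (ht : t ∈ F) :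
    IsBoundedTriangle 4 (w t.1).val (w t.2.1).val (w t.2.2).val := by
  obtain ⟨-, h1, h2, h3, h4⟩ := hw.2 t ht
  simp only [toColouring] at h1 h2 h3 h4
  refine ⟨by exact_mod_cast h1, by exact_mod_cast h2, by exact_mod_cast h3, ?_⟩
  have h4' : (((w t.1).val + (w t.2.1).val + (w t.2.2).val : ℕ) : ℚ) ≤ (4 : ℕ) := by
    push_cast at h4 ⊢; linarith
  exact_mod_cast h4'

lemma eq_zero_or_perm_one_one_two_of_isBoundedTriangle_add_one : ∀ a b c : ZMod 3,
    IsBoundedTriangle 4 a.val b.val c.val →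
      IsBoundedTriangle 4 (a + 1).val (b + 1).val (c + 1).val →
    (a = 0 ∧ b = 0 ∧ c = 0) ∨ (a = 1 ∧ b = 1 ∧ c = 2) ∨ (a = 1 ∧ b = 2 ∧ c = 1) ∨
      (a = 2 ∧ b = 1 ∧ c = 1) := by
  decide

lemma eq_zero_of_toColouring_add_one_mem_adm_six (h3 : Adm F 3 ⊆ {0}) {w : E → ZMod 3}
    (hw : toColouring w ∈ Adm F 6) (hw1 : toColouring (w + 1) ∈ Adm F 6) : w = 0 := by
  have hcases : ∀ t ∈ F, (w t.1 = 0 ∧ w t.2.1 = 0 ∧ w t.2.2 = 0) ∨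
      (w t.1 = 1 ∧ w t.2.1 = 1 ∧ w t.2.2 = 2) ∨ (w t.1 = 1 ∧ w t.2.1 = 2 ∧ w t.2.2 = 1) ∨
      (w t.1 = 2 ∧ w t.2.1 = 1 ∧ w t.2.2 = 1) := fun t ht =>
    eq_zero_or_perm_one_one_two_of_isBoundedTriangle_add_one _ _ _
      (isBoundedTriangle_of_toColouring_mem_adm_six hw ht)
      (isBoundedTriangle_of_toColouring_mem_adm_six hw1 ht)
  have hne_one : ∀ e, w e ≠ 1 := by
    have h21 : (2 : ZMod 3) ≠ 1 := by decide
    have := eq_zero_of_half_valued h3 (η := fun e => if w e = 1 then 1 / 2 else 0)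
      (fun e => by split_ifs <;> simp) (fun t ht => by
        rcases hcases t ht with ⟨ha, hb, hc⟩ | ⟨ha, hb, hc⟩ | ⟨ha, hb, hc⟩ | ⟨ha, hb, hc⟩
        exacts [⟨0, by simp [ha, hb, hc]⟩, ⟨1, by norm_num [ha, hb, hc, h21]⟩,
          ⟨1, by norm_num [ha, hb, hc, h21]⟩, ⟨1, by norm_num [ha, hb, hc, h21]⟩])
    intro e he
    simpa [he] using congrFun this e
  have hzero : ∀ t ∈ F, w t.1 = 0 ∧ w t.2.1 = 0 ∧ w t.2.2 = 0 := fun t ht => by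
    rcases hcases t ht with h | ⟨h, -⟩ | ⟨h, -⟩ | ⟨-, h, -⟩
    exacts [h, absurd h (hne_one _), absurd h (hne_one _), absurd h (hne_one _)]
  have := eq_zero_of_half_valued h3 (η := fun e => if w e = 0 then 0 else 1 / 2)
    (fun e => by split_ifs <;> simp)
    (fun t ht => ⟨0, by simp [hzero t ht]⟩)
  funext e
  simpa using congrFun this e

lemma eq_zero_or_eq_zero_of_shift_mem_adm_six (h3 : Adm F 3 ⊆ {0}) {w : E → ZMod 3}
    (hw : toColouring w ∈ Adm F 6) {c : ZMod 3} (hc : c ≠ 0)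
    (hwc : toColouring (w + Function.const E c) ∈ Adm F 6) :
    w = 0 ∨ w + Function.const E c = 0 := by
  rcases (by decide : ∀ x : ZMod 3, x = 0 ∨ x = 1 ∨ x = 2) c with rfl | rfl | rfl
  · exact absurd rfl hc
  · exact .inl (eq_zero_of_toColouring_add_one_mem_adm_six h3 hw hwc)
  · have hback : w + Function.const E 2 + 1 = w := by
      ext e
      simp [add_assoc, show (2 + 1 : ZMod 3) = 0 from rfl]
    exact .inr (eq_zero_of_toColouring_add_one_mem_adm_six h3 hwc (by rwa [hback]))

end Colourings

lemma card_diff_zero_mul_card_le {E G : Type*} [Finite E] [AddGroup G] [Finite G]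
    (W : Set (E → G))
    (hW : ∀ w ∈ W, ∀ c : G, c ≠ 0 → w + Function.const E c ∈ W →
      w = 0 ∨ w + Function.const E c = 0) :
    Nat.card ↥(W \ {0}) * Nat.card G ≤ Nat.card G ^ Nat.card E := by
  rw [← Nat.card_prod, ← Nat.card_fun]
  refine Nat.card_le_card_of_injective (fun p => p.1.1 + Function.const E p.2) ?_
  rintro ⟨⟨w, hw, hw0⟩, c⟩ ⟨⟨w', hw', hw0'⟩, c'⟩ h
  dsimp only at h
  by_cases hc : c = c'
  · subst hc
    obtain rfl : w = w' := add_right_cancel h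
    rfl
  · have hw'eq : w' = w + Function.const E (c - c') := by
      rw [← Function.const_sub, ← add_sub_assoc, h, add_sub_cancel_right]
    rcases hW w hw (c - c') (sub_ne_zero.mpr hc) (hw'eq ▸ hw') with h0 | h0
    · exact absurd h0 hw0
    · exact absurd (hw'eq.trans h0) hw0'

lemma le_pow_sub_one_of_mul_le_pow {k b n : ℕ} (hb : 0 < b) (h : k * b ≤ b ^ n) :
    k ≤ b ^ (n - 1) := by
  cases n with
  | zero => simpa using (Nat.le_mul_of_pos_right k hb).trans h
  | succ n => exact Nat.le_of_mul_le_mul_right (by rwa [pow_succ] at h) hb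

theorem adm_six_card_le_general {E : Type*} [Fintype E]
    (F : Multiset (E × E × E))
    (h3 : Adm F 3 = {(0 : E → ℚ)}) :
    (Adm F 6).ncard ≤ 3 ^ (Fintype.card E - 1) + 1 := by
  set W : Set (E → ZMod 3) := toColouring ⁻¹' Adm F 6
  have himage : toColouring '' W = Adm F 6 :=
    Set.image_preimage_eq_of_subset fun _ => mem_range_toColouring_of_mem_adm_six h3.subset
  have hcount : (W \ {0}).ncard * 3 ≤ 3 ^ Fintype.card E := by
    simpa [Nat.card_eq_fintype_card] using card_diff_zero_mul_card_le W
      fun _ hw _ hc hwc => eq_zero_or_eq_zero_of_shift_mem_adm_six h3.subset hw hc hwc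
  calc (Adm F 6).ncard = W.ncard := by
        rw [← himage, Set.ncard_image_of_injective _ toColouring_injective]
    _ ≤ (W \ {0}).ncard + 1 := by simpa using Set.ncard_le_ncard_sdiff_add_ncard W {0}
    _ ≤ 3 ^ (Fintype.card E - 1) + 1 := by
        gcongr
        exact le_pow_sub_one_of_mul_le_pow (by norm_num) hcount

/-- For a triangulation datum with nonempty edge set in which every edge occurs
in some triple, the triples connect the edge set, and the zero colouring is the
only element of `Adm(E,F,3)`, the stated bound on `|Adm(E,F,6)|` holds. -/
theorem adm_six_card_le {E : Type*} [Fintype E] [Nonempty E]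
    (F : Multiset (E × E × E))
    (hcover : ∀ e : E, ∃ t ∈ F, e = t.1 ∨ e = t.2.1 ∨ e = t.2.2)
    (hconn : ∀ e e' : E,
      Relation.ReflTransGen
        (fun x y : E => ∃ t ∈ F,
          (x = t.1 ∨ x = t.2.1 ∨ x = t.2.2) ∧ (y = t.1 ∨ y = t.2.1 ∨ y = t.2.2))
        e e')
    (h3 : Adm F 3 = {(0 : E → ℚ)}) :
    (Adm F 6).ncard ≤ 3 ^ (Fintype.card E - 1) + 1 :=
  adm_six_card_le_general F h3
end
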